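/- arXiv:math/0701225 — 3 statements merged into one kernel-verified Lean document; each statement's English description precedes it below -/
import Mathlib

section
/- Let G be a finite group and M a finitely generated ZG-module. For every prime p, the minimal number of QG-module generators of Q⊗M is at most the minimal number of ZG-module generators of M/pM. -/
noncomputable section

/-- The integral group ring ℤG. -/
abbrev ZG (G : Type*) [Group G] : Type _ := MonoidAlgebra ℤ G

/-- `dMod R M` is the minimal number of generators of `M` as an `R`-module. -/
def dMod (R M : Type*) [Ring R] [AddCommGroup M] [Module R M] : ℕ :=
  sInf {n | ∃ s : Finset M, s.card = n ∧ Submodule.span R (s : Set M) = ⊤}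

/-- The submodule `pM` of `M`. -/
def pMul (R M : Type*) [Ring R] [AddCommGroup M] [Module R M] (p : ℕ) : Submodule R M :=
  Submodule.span R {x : M | ∃ m : M, x = p • m}

/-- `dModP R M p` is the minimal number of generators of `M/pM` as an `R`-module. -/
def dModP (R M : Type*) [Ring R] [AddCommGroup M] [Module R M] (p : ℕ) : ℕ :=
  dMod R (M ⧸ pMul R M p)

/-- Minimal number of generators of the group `G`. -/
def dGrp (G : Type*) [Group G] : ℕ :=
  sInf {n | ∃ s : Finset G, s.card = n ∧ Subgroup.closure (s : Set G) = ⊤}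

/-- The augmentation ideal ΔG of ℤG: the kernel of the augmentation map ℤG → ℤ. -/
def aug (G : Type*) [Group G] : Ideal (ZG G) :=
  RingHom.ker ((MonoidAlgebra.lift ℤ ℤ G (1 : G →* ℤ)) : ZG G →ₐ[ℤ] ℤ).toRingHom

/-- `d_G(ΔG)`, minimal number of ℤG-module generators of the augmentation ideal. -/
def dAug (G : Type*) [Group G] : ℕ := dMod (ZG G) (aug G)

/-- `d_G(ΔG/pΔG)`. -/
def dAugP (G : Type*) [Group G] (p : ℕ) : ℕ := dModP (ZG G) (aug G) p

/-- The generation gap `gap(G) = d(G) - d_G(ΔG)` (as an integer). -/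
def gapZ (G : Type*) [Group G] : ℤ := (dGrp G : ℤ) - (dAug G : ℤ)

/-- `p` is a ΔG-prime: a prime with `d_G(ΔG) = d_G(ΔG/pΔG)`. -/
def IsAugPrime (G : Type*) [Group G] (p : ℕ) : Prop := p.Prime ∧ dAug G = dAugP G p

/-- ΔG is a Swan module: some prime is a ΔG-prime. -/
def AugSwan (G : Type*) [Group G] : Prop := ∃ p, IsAugPrime G p

/-- `dModQ R M` is the minimal number of elements of `M` generating `ℚ ⊗ M` over `ℚG`;
equivalently (for `R = ℤG`), the minimal `n` such that some `n` elements of `M` generate a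
`ℤG`-submodule with torsion quotient. -/
def dModQ (R M : Type*) [Ring R] [AddCommGroup M] [Module R M] : ℕ :=
  sInf {n | ∃ s : Finset M, s.card = n ∧
    ∀ m : M, ∃ k : ℤ, k ≠ 0 ∧ k • m ∈ Submodule.span R (s : Set M)}


/-!
Lift a minimal generating set of `M/pM` to a finite set `t ⊆ M` and let `N` be its span, so that
`M = N + pM`. As `G` is finite, `M/N` is a finitely generated abelian group with `p(M/N) = M/N`,
so by Nakayama's lemma over `ℤ` it is killed by some `k ≡ 1 [ZMOD p]`, and `k ≠ 0` because
`p ≠ 1`. Hence `k • M ⊆ N`, i.e. `t` generates `ℚ ⊗ M` over `ℚG`.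
-/

theorem mem_pMul_iff {R M : Type*} [Ring R] [AddCommGroup M] [Module R M] {p : ℕ} {x : M} :
    x ∈ pMul R M p ↔ ∃ m : M, x = p • m := by
  constructor
  · intro hx
    have hle : pMul R M p ≤ LinearMap.range (p • LinearMap.id : M →ₗ[R] M) :=
      Submodule.span_le.mpr fun _ ⟨m, hm⟩ => ⟨m, hm.symm⟩
    obtain ⟨m, hm⟩ := hle hx
    exact ⟨m, hm.symm⟩
  · rintro ⟨m, rfl⟩
    exact Submodule.subset_span ⟨m, rfl⟩

theorem exists_card_eq_dMod (R M : Type*) [Ring R] [AddCommGroup M] [Module R M]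
    [Module.Finite R M] :
    ∃ s : Finset M, s.card = dMod R M ∧ Submodule.span R (s : Set M) = ⊤ := by
  obtain ⟨s, hs⟩ := Module.Finite.fg_top (R := R) (M := M)
  exact Nat.sInf_mem (s := {n | ∃ s : Finset M, s.card = n ∧ Submodule.span R (s : Set M) = ⊤})
    ⟨_, s, rfl, hs⟩

theorem dModQ_le_card {R M : Type*} [Ring R] [AddCommGroup M] [Module R M]
    {s : Finset M} (hs : ∀ m : M, ∃ k : ℤ, k ≠ 0 ∧ k • m ∈ Submodule.span R (s : Set M)) :
    dModQ R M ≤ s.card :=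
  Nat.sInf_le ⟨s, rfl, hs⟩

theorem Submodule.exists_finset_card_le_span_sup_eq_top {R M : Type*} [Ring R] [AddCommGroup M]
    [Module R M] (N : Submodule R M) {s : Finset (M ⧸ N)}
    (hs : Submodule.span R (s : Set (M ⧸ N)) = ⊤) :
    ∃ t : Finset M, t.card ≤ s.card ∧ Submodule.span R (t : Set M) ⊔ N = ⊤ := by
  classical
  have hsurj := N.mkQ_surjective
  refine ⟨s.image (Function.surjInv hsurj), Finset.card_image_le, ?_⟩
  rw [sup_comm, ← Submodule.map_mkQ_eq_top, Submodule.map_span, Finset.coe_image, ← Set.image_comp,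
    (funext (Function.surjInv_eq hsurj) : N.mkQ ∘ Function.surjInv hsurj = id), Set.image_id, hs]

theorem exists_smul_eq_zero_of_forall_eq_nsmul {Q : Type*} [AddCommGroup Q] [Module.Finite ℤ Q]
    {p : ℕ} (hp : p ≠ 1) (hQ : ∀ q : Q, ∃ q' : Q, q = p • q') :
    ∃ k : ℤ, k ≠ 0 ∧ ∀ q : Q, k • q = 0 := by
  have hle : (⊤ : Submodule ℤ Q) ≤ Ideal.span {(p : ℤ)} • ⊤ := fun q _ => by
    obtain ⟨q', rfl⟩ := hQ q
    rw [← Nat.cast_smul_eq_nsmul ℤ]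
    exact Submodule.smul_mem_smul (Ideal.mem_span_singleton_self _) Submodule.mem_top
  obtain ⟨k, hk, hkQ⟩ := Submodule.exists_sub_one_mem_and_smul_eq_zero_of_fg_of_le_smul _ _
    Module.Finite.fg_top hle
  refine ⟨k, ?_, fun q => hkQ q Submodule.mem_top⟩
  rintro rfl
  rw [zero_sub, Ideal.mem_span_singleton, dvd_neg, Int.natCast_dvd_ofNat, Nat.dvd_one] at hk
  exact hp hk

theorem exists_zsmul_mem_of_sup_pMul_eq_top {R M : Type*} [Ring R] [AddCommGroup M] [Module R M]
    [Module.Finite ℤ M] {p : ℕ} (hp : p ≠ 1) {N : Submodule R M} (hN : N ⊔ pMul R M p = ⊤) :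
    ∃ k : ℤ, k ≠ 0 ∧ ∀ m : M, k • m ∈ N := by
  have hQ : ∀ q : M ⧸ N, ∃ q' : M ⧸ N, q = p • q' := by
    intro q
    obtain ⟨m, rfl⟩ := N.mkQ_surjective q
    obtain ⟨y, hy, z, hz, rfl⟩ := Submodule.mem_sup.mp (hN ▸ Submodule.mem_top : m ∈ N ⊔ _)
    obtain ⟨w, rfl⟩ := mem_pMul_iff.mp hz
    refine ⟨N.mkQ w, ?_⟩
    simp [(Submodule.Quotient.mk_eq_zero N).mpr hy]
  have : Module.Finite ℤ (M ⧸ N) :=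
    Module.Finite.of_surjective (N.mkQ.toAddMonoidHom.toIntLinearMap) N.mkQ_surjective
  obtain ⟨k, hk, hkQ⟩ := exists_smul_eq_zero_of_forall_eq_nsmul hp hQ
  exact ⟨k, hk, fun m => (Submodule.Quotient.mk_eq_zero N).mp (hkQ (N.mkQ m))⟩

/-- for a finite group `G` and finitely generated `ℤG`-module `M`,
`d_G(ℚ ⊗ M) ≤ d_G(M/pM)` for every prime `p`. -/
theorem stmt1 (G : Type) [Group G] [Finite G]
    (M : Type) [AddCommGroup M] [Module (ZG G) M] [Module.Finite (ZG G) M]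
    (p : ℕ) (hp : p.Prime) :
    dModQ (ZG G) M ≤ dModP (ZG G) M p := by
  have : Module.Finite ℤ M := Module.Finite.trans (ZG G) M
  obtain ⟨s, hs_card, hs_span⟩ := exists_card_eq_dMod (ZG G) (M ⧸ pMul (ZG G) M p)
  obtain ⟨t, ht_card, ht_sup⟩ := (pMul (ZG G) M p).exists_finset_card_le_span_sup_eq_top hs_span
  obtain ⟨k, hk, hkM⟩ := exists_zsmul_mem_of_sup_pMul_eq_top hp.ne_one ht_sup
  calc dModQ (ZG G) M ≤ t.card := dModQ_le_card fun m => ⟨k, hk, hkM m⟩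
    _ ≤ dModP (ZG G) M p := ht_card.trans hs_card.le
end
end

section
/- Let G be a group, M a finitely generated ZG-module, and π = {p_1,…,p_t} a finite set of primes. Then there exists a family (X_p)_{p∈π} of finite subsets of M such that for each p ∈ π the image of X_p in M/pM is a minimal ZG-generating set of M/pM, and X_p ⊇ X_q if and only if d_G(M/pM) ≥ d_G(M/qM). -/
noncomputable section

/-!
For every `p ∈ π` enumerate a minimal generating set of `M/pM` as a sequence `(e_p(j))_j`.
The moduli in `π` are pairwise coprime, so by the Chinese remainder theorem each tuple
`(e_p(j))_{p ∈ π}` has a common lift `y_j ∈ M`; explicitly `y_j = ∑_p c_p x_p(j)` for lifts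
`x_p(j)` of `e_p(j)` and integers `c_p ≡ 1 (mod p)`, `c_p ≡ 0 (mod q)` for `q ≠ p`. Taking
`X_p = {y_0, …, y_{d_p - 1}}` with `d_p = d_G(M/pM)` makes the family nested by construction.
-/

open Finset

theorem exists_finset_card_eq_dMod_and_span_eq_top (R N : Type*) [Ring R] [AddCommGroup N]
    [Module R N] [Module.Finite R N] :
    ∃ s : Finset N, s.card = dMod R N ∧ Submodule.span R (s : Set N) = ⊤ := by
  obtain ⟨s, hs⟩ := Module.Finite.fg_top (R := R) (M := N)
  have hne : {n | ∃ s : Finset N, s.card = n ∧ Submodule.span R (s : Set N) = ⊤}.Nonempty :=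
    ⟨s.card, s, rfl, hs⟩
  exact Nat.sInf_mem hne

theorem Finset.exists_image_range_card_eq {α : Type*} [DecidableEq α] [Nonempty α]
    (s : Finset α) :
    ∃ e : ℕ → α, (range s.card).image e = s := by
  inhabit α
  refine ⟨fun j => s.toList.getD j default, ?_⟩
  ext x
  simp only [mem_image, mem_range, ← Finset.length_toList, ← Finset.mem_toList (s := s),
    List.mem_iff_getElem]
  constructor
  · rintro ⟨j, hj, rfl⟩
    exact ⟨j, hj, (List.getD_eq_getElem _ _ hj).symm⟩
  · rintro ⟨j, hj, rfl⟩
    exact ⟨j, hj, List.getD_eq_getElem _ _ hj⟩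

theorem Int.exists_dvd_sub_one_and_forall_dvd {π : Finset ℕ}
    (hπ : (π : Set ℕ).Pairwise Nat.Coprime) {p : ℕ} (hp : p ∈ π) :
    ∃ c : ℤ, (p : ℤ) ∣ c - 1 ∧ ∀ q ∈ π, q ≠ p → (q : ℤ) ∣ c := by
  have hcop : IsCoprime (p : ℤ) (∏ q ∈ π.erase p, (q : ℤ)) :=
    IsCoprime.prod_right fun q hq => Nat.isCoprime_iff_coprime.mpr
      (hπ hp (mem_of_mem_erase hq) (ne_of_mem_erase hq).symm)
  obtain ⟨u, v, huv⟩ := hcop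
  refine ⟨v * ∏ q ∈ π.erase p, (q : ℤ), ⟨-u, by linear_combination huv⟩,
    fun q hq hqp => ?_⟩
  exact (dvd_prod_of_mem _ (mem_erase.mpr ⟨hqp, hq⟩)).mul_left v

section pMul

variable {R M : Type*} [Ring R] [AddCommGroup M] [Module R M]

theorem zsmul_mem_pMul_of_dvd {p : ℕ} {z : ℤ} (hz : (p : ℤ) ∣ z) (m : M) :
    z • m ∈ pMul R M p := by
  obtain ⟨k, rfl⟩ := hz
  exact Submodule.subset_span ⟨k • m, by rw [mul_smul, natCast_zsmul]⟩

theorem exists_mk_eq_of_pairwise_coprime {π : Finset ℕ}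
    (hπ : (π : Set ℕ).Pairwise Nat.Coprime) (x : ∀ p, M ⧸ pMul R M p) :
    ∃ y : M, ∀ p ∈ π, Submodule.Quotient.mk y = x p := by
  choose c hc_one hc_zero using
    fun p (hp : p ∈ π) => Int.exists_dvd_sub_one_and_forall_dvd hπ hp
  choose m hm using fun p => Submodule.Quotient.mk_surjective (pMul R M p) (x p)
  refine ⟨∑ q ∈ π.attach, c q q.2 • m q, fun p hp => ?_⟩
  rw [← hm p, Submodule.Quotient.eq]
  have hsplit : ∑ q ∈ π.attach, c q q.2 • m q - m p =
      (c p hp - 1) • m p + ∑ q ∈ π.attach.erase ⟨p, hp⟩, c q q.2 • m q := by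
    rw [← add_sum_erase _ _ (mem_attach _ ⟨p, hp⟩), sub_smul, one_smul]
    abel
  rw [hsplit]
  refine add_mem (zsmul_mem_pMul_of_dvd (hc_one p hp) _) (Submodule.sum_mem _ fun q hq => ?_)
  have hpq : p ≠ q := fun h => ne_of_mem_erase hq (Subtype.ext h.symm)
  exact zsmul_mem_pMul_of_dvd (hc_zero q q.2 p hp hpq) _

end pMul

/-- existence of a nested π-family. For a finite set `π` of primes there is a
family `(X_p)_{p ∈ π}` of finite subsets of `M` such that for each `p ∈ π` the image of `X_p`
in `M/pM` is a minimal `ℤG`-generating set of `M/pM` (it generates, and `|X_p| = d_G(M/pM)`),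
and `X_p ⊇ X_q` iff `d_G(M/pM) ≥ d_G(M/qM)`. -/
theorem stmt5 (G : Type) [Group G]
    (M : Type) [AddCommGroup M] [Module (ZG G) M] [Module.Finite (ZG G) M]
    (π : Finset ℕ) (hπ : ∀ p ∈ π, p.Prime) :
    ∃ X : ℕ → Finset M,
      (∀ p ∈ π, (X p).card = dModP (ZG G) M p ∧
        Submodule.span (ZG G)
          ((Submodule.Quotient.mk (p := pMul (ZG G) M p)) '' (X p : Set M)) = ⊤) ∧
      (∀ p ∈ π, ∀ q ∈ π,
        X q ⊆ X p ↔ dModP (ZG G) M q ≤ dModP (ZG G) M p) := by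
  classical
  have hcop : (π : Set ℕ).Pairwise Nat.Coprime := fun p hp q hq hpq =>
    (Nat.coprime_primes (hπ p hp) (hπ q hq)).mpr hpq
  choose s hs_card hs_span using fun p =>
    exists_finset_card_eq_dMod_and_span_eq_top (ZG G) (M ⧸ pMul (ZG G) M p)
  choose e he using fun p => (s p).exists_image_range_card_eq
  choose y hy using fun j => exists_mk_eq_of_pairwise_coprime hcop fun p => e p j
  let X p := (range (dModP (ZG G) M p)).image y
  have himage : ∀ p ∈ π, (X p).image (Submodule.Quotient.mk (p := pMul (ZG G) M p)) = s p := by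
    intro p hp
    rw [image_image, ← he p, hs_card p]
    exact image_congr fun j _ => hy j p hp
  have hcard : ∀ p ∈ π, (X p).card = dModP (ZG G) M p := by
    intro p hp
    have hge := (X p).card_image_le (f := Submodule.Quotient.mk (p := pMul (ZG G) M p))
    rw [himage p hp, hs_card p] at hge
    exact le_antisymm (card_image_le.trans (card_range _).le) hge
  refine ⟨X, fun p hp => ⟨hcard p hp, ?_⟩, fun p hp q hq => ⟨fun h => ?_, fun h => ?_⟩⟩
  · rw [← coe_image, himage p hp, hs_span p]
  · exact hcard q hq ▸ hcard p hp ▸ card_le_card h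
  · exact image_subset_image (range_subset_range.mpr h)
end
end

section
/- Let G be a finite cyclic group of order n generated by a, presented as F/R with F = ⟨x⟩ infinite cyclic and R = ⟨x^n⟩, and let C = ⟨c⟩ be infinite cyclic. Let S be the kernel of the natural surjection F * C → G × C. Then the relation module S/S' requires exactly 2 generators as a Z[G×C]-module: d_{G×C}(S/[S,S]) = 2. -/
noncomputable section

/-- `dRelMod S` for a normal subgroup `S` of `E`: the minimal number of elements of `S`
that generate `S` modulo `S' = ⁅S,S⁆` together with all their `E`-conjugates. For
`S = ker (E ↠ H)` this is exactly the minimal number of `ℤH`-module generators of the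
relation module `S/S'` (the `ℤH`-span of the images of `T` is the subgroup generated by
all conjugates of `T` modulo `S'`). -/
def dRelMod {E : Type*} [Group E] (S : Subgroup E) : ℕ :=
  sInf {k | ∃ T : Finset E, (T : Set E) ⊆ (S : Set E) ∧ T.card = k ∧
    Subgroup.closure {x : E | ∃ t ∈ T, ∃ e : E, x = e * t * e⁻¹} ⊔ ⁅S, S⁆ = S}

/-!
Write `E = F * C` for the free group on `x` and `c`. The relators `xⁿ` and `⁅x, c⁆` normally
generate `S`: modulo them every word equals `x^a c^b` with `(a, b)` its exponent sums, so two
generators suffice. For the lower bound, the Magnus map sends `E` onto the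
integral Heisenberg group `E/γ₃E`, with coordinates `(a, b, c)`. Elements of `S` have `b = 0` and
`n ∣ a`; on them `s ↦ (a, c mod n)` is additive, kills `⁅S, S⁆`, and is invariant under
conjugation by `E`, because conjugation shifts `c` by a multiple of `a`. It maps `xⁿ` to `(n, 0)`
and `⁅x, c⁆` to `(0, 1)`, and these do not lie in one cyclic subgroup of `ℤ × ℤ/n`, so a
single normal generator cannot suffice.
-/

open scoped commutatorElement

section RelationModule

variable {E : Type*} [Group E]

lemma closure_conjugates_eq_normalClosure (T : Finset E) :
    Subgroup.closure {x : E | ∃ t ∈ T, ∃ e : E, x = e * t * e⁻¹} =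
      Subgroup.normalClosure (T : Set E) := by
  rw [Subgroup.normalClosure]
  congr 1
  ext x
  simp [Group.mem_conjugatesOfSet_iff, isConj_iff, eq_comm]

lemma closure_conjugates_sup_commutator_eq {S : Subgroup E} [S.Normal] {T : Finset E}
    (hTS : (T : Set E) ⊆ S) (hST : S ≤ Subgroup.normalClosure (T : Set E)) :
    Subgroup.closure {x : E | ∃ t ∈ T, ∃ e : E, x = e * t * e⁻¹} ⊔ ⁅S, S⁆ = S := by
  rw [closure_conjugates_eq_normalClosure]
  exact le_antisymm (sup_le (Subgroup.normalClosure_le_normal hTS)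
    (Subgroup.commutator_le_left S S)) (hST.trans le_sup_left)

lemma dRelMod_le_card {S : Subgroup E} [S.Normal] {T : Finset E} (hTS : (T : Set E) ⊆ S)
    (hST : S ≤ Subgroup.normalClosure (T : Set E)) : dRelMod S ≤ T.card :=
  Nat.sInf_le ⟨T, hTS, rfl, closure_conjugates_sup_commutator_eq hTS hST⟩

lemma le_dRelMod {S : Subgroup E} [S.Normal] {T₀ : Finset E} (hT₀S : (T₀ : Set E) ⊆ S)
    (hST₀ : S ≤ Subgroup.normalClosure (T₀ : Set E)) {k : ℕ}
    (h : ∀ T : Finset E, (T : Set E) ⊆ S →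
      S ≤ Subgroup.normalClosure (T : Set E) ⊔ ⁅S, S⁆ → k ≤ T.card) :
    k ≤ dRelMod S := by
  refine le_csInf ⟨_, T₀, hT₀S, rfl, closure_conjugates_sup_commutator_eq hT₀S hST₀⟩ ?_
  rintro _ ⟨T, hTS, rfl, hT⟩
  exact h T hTS (by rw [← closure_conjugates_eq_normalClosure, hT])

lemma apply_mem_closure_image_of_le_normalClosure_sup_commutator {A : Type*} [AddCommGroup A]
    {S : Subgroup E} [S.Normal] (ρ : E → A)
    (hmul : ∀ s ∈ S, ∀ t ∈ S, ρ (s * t) = ρ s + ρ t)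
    (hconj : ∀ e : E, ∀ s ∈ S, ρ (e * s * e⁻¹) = ρ s) {T : Set E} (hTS : T ⊆ S)
    (hST : S ≤ Subgroup.normalClosure T ⊔ ⁅S, S⁆) {s : E} (hs : s ∈ S) :
    ρ s ∈ AddSubgroup.closure (ρ '' T) := by
  set Z := AddSubgroup.closure (ρ '' T)
  have hone : ρ 1 = 0 := by
    simpa using hmul 1 S.one_mem 1 S.one_mem
  have hinv : ∀ s ∈ S, ρ s⁻¹ = -ρ s := fun s hs => by
    have := hmul s hs s⁻¹ (S.inv_mem hs)
    rw [mul_inv_cancel, hone] at this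
    exact (neg_eq_of_add_eq_zero_right this.symm).symm
  let P : Subgroup E :=
    { carrier := {s | s ∈ S ∧ ρ s ∈ Z}
      one_mem' := ⟨S.one_mem, hone ▸ Z.zero_mem⟩
      mul_mem' := fun ⟨hs, hsZ⟩ ⟨ht, htZ⟩ =>
        ⟨S.mul_mem hs ht, hmul _ hs _ ht ▸ Z.add_mem hsZ htZ⟩
      inv_mem' := fun ⟨hs, hsZ⟩ => ⟨S.inv_mem hs, hinv _ hs ▸ Z.neg_mem hsZ⟩ }
  have : P.Normal :=
    ⟨fun s ⟨hs, hsZ⟩ e => ⟨‹S.Normal›.conj_mem s hs e, (hconj e s hs).symm ▸ hsZ⟩⟩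
  have hTP : Subgroup.normalClosure T ≤ P := Subgroup.normalClosure_le_normal
    fun t ht => ⟨hTS ht, AddSubgroup.subset_closure (Set.mem_image_of_mem ρ ht)⟩
  have hcommP : ⁅S, S⁆ ≤ P := Subgroup.commutator_le.mpr fun s hs t ht => by
    have hst := S.mul_mem hs ht
    refine ⟨Subgroup.commutator_le_left S S (Subgroup.commutator_mem_commutator hs ht), ?_⟩
    rw [commutatorElement_def, hmul _ (S.mul_mem hst (S.inv_mem hs)) _ (S.inv_mem ht),
      hmul _ hst _ (S.inv_mem hs), hmul _ hs _ ht, hinv _ hs, hinv _ ht, add_neg_cancel_comm,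
      add_neg_cancel]
    exact Z.zero_mem
  exact (hST.trans (sup_le hTP hcommP) hs).2

end RelationModule

/-- `(a, b, c)` stands for the unitriangular matrix `[[1, a, c], [0, 1, b], [0, 0, 1]]`. -/
@[ext] structure Heisenberg where
  a : ℤ
  b : ℤ
  c : ℤ

namespace Heisenberg

instance : Mul Heisenberg := ⟨fun u v => ⟨u.a + v.a, u.b + v.b, u.c + v.c + u.a * v.b⟩⟩
instance : One Heisenberg := ⟨⟨0, 0, 0⟩⟩
instance : Inv Heisenberg := ⟨fun u => ⟨-u.a, -u.b, -u.c + u.a * u.b⟩⟩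

@[simp] lemma mul_a (u v : Heisenberg) : (u * v).a = u.a + v.a := rfl
@[simp] lemma mul_b (u v : Heisenberg) : (u * v).b = u.b + v.b := rfl
@[simp] lemma mul_c (u v : Heisenberg) : (u * v).c = u.c + v.c + u.a * v.b := rfl
@[simp] lemma one_a : (1 : Heisenberg).a = 0 := rfl
@[simp] lemma one_b : (1 : Heisenberg).b = 0 := rfl
@[simp] lemma one_c : (1 : Heisenberg).c = 0 := rfl
@[simp] lemma inv_a (u : Heisenberg) : u⁻¹.a = -u.a := rfl
@[simp] lemma inv_b (u : Heisenberg) : u⁻¹.b = -u.b := rfl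
@[simp] lemma inv_c (u : Heisenberg) : u⁻¹.c = -u.c + u.a * u.b := rfl

instance : Group Heisenberg where
  mul_assoc u v w := by ext <;> simp <;> ring
  one_mul u := by ext <;> simp
  mul_one u := by ext <;> simp
  inv_mul_cancel u := by ext <;> simp

lemma conj_c_of_b_eq_zero (g u : Heisenberg) (hu : u.b = 0) :
    (g * u * g⁻¹).c = u.c - u.a * g.b := by
  simp only [mul_c, mul_a, inv_b, inv_c, hu]
  ring

end Heisenberg

namespace CyclicProdInt

abbrev x : FreeGroup Bool := FreeGroup.of false
abbrev c : FreeGroup Bool := FreeGroup.of true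

def proj (n : ℕ) : FreeGroup Bool →* Multiplicative (ZMod n) × Multiplicative ℤ :=
  FreeGroup.lift (fun b : Bool =>
    if b then ((1 : Multiplicative (ZMod n)), Multiplicative.ofAdd (1 : ℤ))
    else (Multiplicative.ofAdd (1 : ZMod n), (1 : Multiplicative ℤ)))

def magnus : FreeGroup Bool →* Heisenberg :=
  FreeGroup.lift (fun b : Bool => if b then ⟨0, 1, 0⟩ else ⟨1, 0, 0⟩)

@[simp] lemma magnus_x : magnus x = ⟨1, 0, 0⟩ := by simp [magnus]
@[simp] lemma magnus_c : magnus c = ⟨0, 1, 0⟩ := by simp [magnus]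

lemma magnus_x_pow (k : ℕ) : magnus (x ^ k) = ⟨k, 0, 0⟩ := by
  induction k with
  | zero => rfl
  | succ k ih => ext <;> simp [pow_succ, ih]

lemma magnus_commutator : magnus ⁅x, c⁆ = ⟨0, 0, 1⟩ := by
  ext <;> simp [commutatorElement_def]

lemma proj_apply (n : ℕ) (w : FreeGroup Bool) :
    proj n w =
      (Multiplicative.ofAdd ((magnus w).a : ZMod n), Multiplicative.ofAdd (magnus w).b) := by
  let ab : Heisenberg →* Multiplicative (ZMod n) × Multiplicative ℤ :=
    { toFun u := (Multiplicative.ofAdd (u.a : ZMod n), Multiplicative.ofAdd u.b)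
      map_one' := by simp
      map_mul' u v := by simp [← ofAdd_add] }
  change proj n w = (ab.comp magnus) w
  congr 1
  apply FreeGroup.ext_hom
  rintro (_ | _) <;> simp [proj, magnus, ab]

lemma magnus_of_mem_ker {n : ℕ} {s : FreeGroup Bool} (hs : s ∈ (proj n).ker) :
    ((magnus s).a : ZMod n) = 0 ∧ (magnus s).b = 0 := by
  simpa [proj_apply, Prod.ext_iff] using hs

lemma map_eq_zpow_mul_zpow {Q : Type*} [Group Q] (f : FreeGroup Bool →* Q)
    (hf : Commute (f x) (f c)) (w : FreeGroup Bool) :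
    f w = f x ^ (magnus w).a * f c ^ (magnus w).b := by
  let g : FreeGroup Bool →* Q :=
    MonoidHom.mk' (fun w => f x ^ (magnus w).a * f c ^ (magnus w).b) fun v w => by
      simp only [map_mul, Heisenberg.mul_a, Heisenberg.mul_b, zpow_add]
      exact (hf.zpow_zpow _ _).mul_mul_mul_comm _ _
  have hfg : f = g := FreeGroup.ext_hom f g fun b => by cases b <;> simp [g]
  exact DFunLike.congr_fun hfg w

lemma ker_proj_le_normalClosure (n : ℕ) :
    (proj n).ker ≤ Subgroup.normalClosure {x ^ n, ⁅x, c⁆} := by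
  set N := Subgroup.normalClosure ({x ^ n, ⁅x, c⁆} : Set (FreeGroup Bool))
  have hx : QuotientGroup.mk' N (x ^ n) = 1 :=
    (QuotientGroup.eq_one_iff _).mpr (Subgroup.subset_normalClosure (by simp))
  have hxc : Commute (QuotientGroup.mk' N x) (QuotientGroup.mk' N c) := by
    rw [← commutatorElement_eq_one_iff_commute, ← map_commutatorElement,
      QuotientGroup.mk'_apply, QuotientGroup.eq_one_iff]
    exact Subgroup.subset_normalClosure (by simp)
  intro w hw
  obtain ⟨ha, hb⟩ := magnus_of_mem_ker hw
  obtain ⟨k, hk⟩ := (ZMod.intCast_zmod_eq_zero_iff_dvd _ _).mp ha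
  rw [← QuotientGroup.ker_mk' N, MonoidHom.mem_ker, map_eq_zpow_mul_zpow _ hxc, hb, hk,
    zpow_zero, mul_one, zpow_mul, zpow_natCast, ← map_pow, hx, one_zpow]

lemma x_pow_mem_ker (n : ℕ) : x ^ n ∈ (proj n).ker := by
  simp [proj_apply, magnus_x_pow]

lemma commutator_mem_ker (n : ℕ) : ⁅x, c⁆ ∈ (proj n).ker := by
  simp [proj_apply, magnus_commutator, -map_commutatorElement]

def invariant (n : ℕ) (w : FreeGroup Bool) : ℤ × ZMod n := ((magnus w).a, (magnus w).c)

lemma invariant_mul {n : ℕ} (s : FreeGroup Bool) {t : FreeGroup Bool}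
    (ht : t ∈ (proj n).ker) :
    invariant n (s * t) = invariant n s + invariant n t := by
  simp [invariant, (magnus_of_mem_ker ht).2]

lemma invariant_conj {n : ℕ} (e : FreeGroup Bool) {s : FreeGroup Bool}
    (hs : s ∈ (proj n).ker) :
    invariant n (e * s * e⁻¹) = invariant n s := by
  obtain ⟨ha, hb⟩ := magnus_of_mem_ker hs
  have hc := Heisenberg.conj_c_of_b_eq_zero (magnus e) (magnus s) hb
  refine Prod.ext (by simp [invariant]) ?_
  simp only [invariant, map_mul, map_inv] at hc ⊢
  rw [hc]
  push_cast
  rw [ha, zero_mul, sub_zero]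

lemma invariant_x_pow (n : ℕ) : invariant n (x ^ n) = ((n : ℤ), 0) := by
  simp [invariant, magnus_x_pow]

lemma invariant_commutator (n : ℕ) : invariant n ⁅x, c⁆ = (0, 1) := by
  simp [invariant, magnus_commutator, -map_commutatorElement]

lemma zero_one_notMem_zmultiples {n : ℕ} (hn : 1 < n) {g : ℤ × ZMod n}
    (hg : ((n : ℤ), (0 : ZMod n)) ∈ AddSubgroup.zmultiples g) :
    ((0 : ℤ), (1 : ZMod n)) ∉ AddSubgroup.zmultiples g := by
  have : Fact (1 < n) := ⟨hn⟩
  rintro ⟨m, hm⟩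
  obtain ⟨k, hk⟩ := hg
  simp only [Prod.ext_iff, Prod.smul_fst, Prod.smul_snd, smul_eq_mul] at hk hm
  rcases mul_eq_zero.mp hm.1 with rfl | hg₁
  · simp at hm
  · rw [hg₁, mul_zero] at hk
    omega

lemma two_le_card {n : ℕ} (hn : 1 < n) (T : Finset (FreeGroup Bool))
    (hTS : (T : Set (FreeGroup Bool)) ⊆ (proj n).ker)
    (hST : (proj n).ker ≤ Subgroup.normalClosure (T : Set (FreeGroup Bool)) ⊔
      ⁅(proj n).ker, (proj n).ker⁆) :
    2 ≤ T.card := by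
  by_contra! hT
  obtain ⟨t₀, ht₀⟩ := Finset.card_le_one_iff_subset_singleton.mp (Nat.lt_succ_iff.mp hT)
  have hcyc :
      ∀ s ∈ (proj n).ker, invariant n s ∈ AddSubgroup.zmultiples (invariant n t₀) := by
    intro s hs
    have hT₀ : invariant n '' T ⊆ AddSubgroup.zmultiples (invariant n t₀) := by
      rintro _ ⟨t, ht, rfl⟩
      rw [Finset.mem_singleton.mp (ht₀ ht)]
      exact AddSubgroup.mem_zmultiples _
    exact (AddSubgroup.closure_le _).mpr hT₀
      (apply_mem_closure_image_of_le_normalClosure_sup_commutator (invariant n)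
        (fun s _ t ht => invariant_mul s ht) (fun e s hs => invariant_conj e hs) hTS hST hs)
  exact zero_one_notMem_zmultiples hn (invariant_x_pow n ▸ hcyc _ (x_pow_mem_ker n))
    (invariant_commutator n ▸ hcyc _ (commutator_mem_ker n))

end CyclicProdInt

/-- let `G` be a (nontrivial) finite cyclic group of order `n` generated by
`a`, presented as `F/R` with `F = ⟨x⟩` infinite cyclic and `R = ⟨xⁿ⟩`, and `C = ⟨c⟩`
infinite cyclic. Let `S` be the kernel of the natural surjection `F * C → G × C`
(sending `x ↦ (a,1)` and `c ↦ (1,c)`; here `F * C` is the free group on two letters).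
Then the relation module `S/S'` requires exactly 2 generators as a `ℤ[G × C]`-module. -/
theorem stmt18 (n : ℕ) (hn : 1 < n) :
    dRelMod (MonoidHom.ker
      (FreeGroup.lift (fun b : Bool =>
        if b then ((1 : Multiplicative (ZMod n)), Multiplicative.ofAdd (1 : ℤ))
        else (Multiplicative.ofAdd (1 : ZMod n), (1 : Multiplicative ℤ))))) = 2 := by
  open CyclicProdInt in
  change dRelMod (proj n).ker = 2
  set T₀ : Finset (FreeGroup Bool) := {x ^ n, ⁅x, c⁆}
  have hT₀S : (T₀ : Set (FreeGroup Bool)) ⊆ (proj n).ker := by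
    rw [Finset.coe_pair]
    exact Set.pair_subset (x_pow_mem_ker n) (commutator_mem_ker n)
  have hST₀ : (proj n).ker ≤ Subgroup.normalClosure (T₀ : Set (FreeGroup Bool)) := by
    rw [Finset.coe_pair]
    exact ker_proj_le_normalClosure n
  exact le_antisymm ((dRelMod_le_card hT₀S hST₀).trans Finset.card_le_two)
    (le_dRelMod hT₀S hST₀ fun T hTS hST => two_le_card hn T hTS hST)
end
end
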